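/- Let μ be a probability measure on ℝ × ℝ with marginal distributions μ₁ and μ₂, let F(x,y) = μ{(a,b) : a ≤ x ∧ b ≤ y}, F₁(x) = μ₁(−∞,x], F₂(y) = μ₂(−∞,y]. Then ∫_ℝ ∫_ℝ ( F(x,y) − F₁(x)·F₂(y) )² dx dy = 0 if and only if μ equals the product measure μ₁ ⊗ μ₂ (equivalently, F(x,y) = F₁(x)·F₂(y) for all x, y). -/
import Mathlib


open MeasureTheory Set Filter Topology
open scoped ENNReal

lemma iInter_Iic_add (x₀ : ℝ) : ⋂ n : ℕ, Set.Iic (x₀ + 1 / (n + 1)) = Set.Iic x₀ := by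
  ext p
  simp only [Set.mem_iInter, Set.mem_Iic]
  constructor
  · intro h
    by_contra hlt
    push_neg at hlt
    obtain ⟨n, hn⟩ := exists_nat_one_div_lt (sub_pos.2 hlt)
    have := h n
    linarith
  · intro h n
    have : (0 : ℝ) < 1 / (n + 1) := by positivity
    linarith

lemma antitone_Iic_add (x₀ : ℝ) : Antitone (fun n : ℕ => Set.Iic (x₀ + 1 / (n + 1))) := by
  intro n m hnm
  apply Set.Iic_subset_Iic.2
  have h1 : (1 : ℝ) / (m + 1) ≤ 1 / (n + 1) := by
    apply one_div_le_one_div_of_le (by positivity)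
    exact_mod_cast Nat.succ_le_succ hnm
  linarith

lemma tendsto_cdf1 (ν : Measure ℝ) [IsFiniteMeasure ν] (x₀ : ℝ) :
    Tendsto (fun n : ℕ => ν (Set.Iic (x₀ + 1 / (n + 1)))) atTop (𝓝 (ν (Set.Iic x₀))) := by
  have := tendsto_measure_iInter_atTop (μ := ν)
    (s := fun n : ℕ => Set.Iic (x₀ + 1 / (n + 1)))
    (fun n => measurableSet_Iic.nullMeasurableSet) (antitone_Iic_add x₀)
    ⟨0, measure_ne_top _ _⟩
  rwa [iInter_Iic_add] at this

lemma tendsto_cdf2 (μ : Measure (ℝ × ℝ)) [IsFiniteMeasure μ] (x₀ y₀ : ℝ) :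
    Tendsto (fun n : ℕ => μ (Set.Iic (x₀ + 1 / (n + 1)) ×ˢ Set.Iic (y₀ + 1 / (n + 1))))
      atTop (𝓝 (μ (Set.Iic x₀ ×ˢ Set.Iic y₀))) := by
  have := tendsto_measure_iInter_atTop (μ := μ)
    (s := fun n : ℕ => Set.Iic (x₀ + 1 / (n + 1)) ×ˢ Set.Iic (y₀ + 1 / (n + 1)))
    (fun n => (measurableSet_Iic.prod measurableSet_Iic).nullMeasurableSet)
    (fun n m hnm => Set.prod_mono (antitone_Iic_add x₀ hnm) (antitone_Iic_add y₀ hnm))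
    ⟨0, measure_ne_top _ _⟩
  have hiI : (⋂ n : ℕ, Set.Iic (x₀ + 1 / (n + 1)) ×ˢ Set.Iic (y₀ + 1 / (n + 1))) =
      Set.Iic x₀ ×ˢ Set.Iic y₀ := by
    have h1 := iInter_Iic_add x₀
    have h2 := iInter_Iic_add y₀
    ext p
    simp only [Set.mem_iInter, Set.mem_prod]
    constructor
    · intro h
      exact ⟨by rw [← h1]; exact Set.mem_iInter.2 fun n => (h n).1,
             by rw [← h2]; exact Set.mem_iInter.2 fun n => (h n).2⟩
    · rintro ⟨ha, hb⟩ n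
      rw [← h1] at ha
      rw [← h2] at hb
      exact ⟨Set.mem_iInter.1 ha n, Set.mem_iInter.1 hb n⟩
  rw [hiI] at this
  exact this

lemma measurable_cdf2 (μ : Measure (ℝ × ℝ)) [SFinite μ] :
    Measurable (fun q : ℝ × ℝ => μ (Set.Iic q.1 ×ˢ Set.Iic q.2)) := by
  have hS : MeasurableSet {z : (ℝ × ℝ) × (ℝ × ℝ) | z.2.1 ≤ z.1.1 ∧ z.2.2 ≤ z.1.2} := by
    apply MeasurableSet.inter
    · exact measurableSet_le (measurable_fst.comp measurable_snd)
        (measurable_fst.comp measurable_fst)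
    · exact measurableSet_le (measurable_snd.comp measurable_snd)
        (measurable_snd.comp measurable_fst)
  have key : ∀ q : ℝ × ℝ, μ (Set.Iic q.1 ×ˢ Set.Iic q.2) =
      ∫⁻ p, ({z : (ℝ × ℝ) × (ℝ × ℝ) | z.2.1 ≤ z.1.1 ∧ z.2.2 ≤ z.1.2}.indicator 1) (q, p) ∂μ := by
    intro q
    rw [← lintegral_indicator_one (measurableSet_Iic.prod measurableSet_Iic)]
    refine lintegral_congr fun p => ?_
    simp only [Set.indicator_apply, Set.mem_setOf_eq, Set.mem_prod, Set.mem_Iic, Pi.one_apply]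
  simp only [key]
  exact Measurable.lintegral_prod_right' ((measurable_indicator_const_iff 1).2 hS)

lemma measurable_cdf1 (ν : Measure ℝ) : Measurable (fun x : ℝ => ν (Set.Iic x)) :=
  Monotone.measurable fun a b hab => measure_mono (Set.Iic_subset_Iic.2 hab)

theorem stmt2 (μ : Measure (ℝ × ℝ)) [IsProbabilityMeasure μ] :
    (∫⁻ x : ℝ, ∫⁻ y : ℝ,
        ENNReal.ofReal
          (((μ {p : ℝ × ℝ | p.1 ≤ x ∧ p.2 ≤ y}).toReal -
              ((μ.map Prod.fst) (Set.Iic x)).toReal *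
                ((μ.map Prod.snd) (Set.Iic y)).toReal) ^ 2)) = 0 ↔
      μ = (μ.map Prod.fst).prod (μ.map Prod.snd) := by
  have h₁ : IsProbabilityMeasure (μ.map Prod.fst) :=
    Measure.isProbabilityMeasure_map measurable_fst.aemeasurable
  have h₂ : IsProbabilityMeasure (μ.map Prod.snd) :=
    Measure.isProbabilityMeasure_map measurable_snd.aemeasurable
  have hset : ∀ x y : ℝ, {p : ℝ × ℝ | p.1 ≤ x ∧ p.2 ≤ y} = Set.Iic x ×ˢ Set.Iic y :=
    fun x y => rfl
  set F : ℝ → ℝ → ℝ≥0∞ := fun x y => μ (Set.Iic x ×ˢ Set.Iic y) with hF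
  set F₁ : ℝ → ℝ≥0∞ := fun x => (μ.map Prod.fst) (Set.Iic x) with hF₁
  set F₂ : ℝ → ℝ≥0∞ := fun y => (μ.map Prod.snd) (Set.Iic y) with hF₂
  set f : ℝ → ℝ → ℝ≥0∞ := fun x y =>
    ENNReal.ofReal (((F x y).toReal - (F₁ x).toReal * (F₂ y).toReal) ^ 2) with hf
  have hmeasf : Measurable (Function.uncurry f) := by
    apply ENNReal.measurable_ofReal.comp
    apply Measurable.pow_const
    apply Measurable.sub
    · exact (ENNReal.measurable_toReal.comp (measurable_cdf2 μ))
    · exact ((ENNReal.measurable_toReal.comp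
        ((measurable_cdf1 (μ.map Prod.fst)).comp measurable_fst)).mul
        (ENNReal.measurable_toReal.comp
          ((measurable_cdf1 (μ.map Prod.snd)).comp measurable_snd)))
  have hrw : (∫⁻ x : ℝ, ∫⁻ y : ℝ,
        ENNReal.ofReal
          (((μ {p : ℝ × ℝ | p.1 ≤ x ∧ p.2 ≤ y}).toReal -
              ((μ.map Prod.fst) (Set.Iic x)).toReal *
                ((μ.map Prod.snd) (Set.Iic y)).toReal) ^ 2)) =
      ∫⁻ z : ℝ × ℝ, f z.1 z.2 ∂((volume : Measure ℝ).prod volume) := by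
    rw [← lintegral_lintegral hmeasf.aemeasurable]
    rfl
  constructor
  · intro h
    -- from the integral being zero, get pointwise a.e. equality
    rw [hrw] at h
    have h0 : Function.uncurry f =ᵐ[(volume : Measure ℝ).prod volume] 0 :=
      (lintegral_eq_zero_iff hmeasf).1 h
    have hae := Measure.ae_ae_of_ae_prod h0
    -- turn it into the ENNReal equation
    have hae' : ∀ᵐ x : ℝ, ∀ᵐ y : ℝ, F x y = F₁ x * F₂ y := by
      filter_upwards [hae] with x hx
      filter_upwards [hx] with y hy
      have h0 : ((F x y).toReal - (F₁ x).toReal * (F₂ y).toReal) ^ 2 = 0 := by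
        have := hy
        simp only [Function.uncurry, Pi.zero_apply, hf] at this
        have hle : ((F x y).toReal - (F₁ x).toReal * (F₂ y).toReal) ^ 2 ≤ 0 :=
          (ENNReal.ofReal_eq_zero).1 this
        nlinarith [sq_nonneg ((F x y).toReal - (F₁ x).toReal * (F₂ y).toReal)]
      have heq : (F x y).toReal = (F₁ x).toReal * (F₂ y).toReal := by
        have := pow_eq_zero_iff (n := 2) (by norm_num) |>.1 h0
        linarith
      calc F x y = ENNReal.ofReal (F x y).toReal :=
            (ENNReal.ofReal_toReal (measure_ne_top _ _)).symm
        _ = ENNReal.ofReal ((F₁ x * F₂ y).toReal) := by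
            rw [heq, ENNReal.toReal_mul]
        _ = F₁ x * F₂ y := ENNReal.ofReal_toReal
            (ENNReal.mul_ne_top (measure_ne_top _ _) (measure_ne_top _ _))
    -- now upgrade to everywhere using right-continuity
    have hall : ∀ x y : ℝ, F x y = F₁ x * F₂ y := by
      intro x₀ y₀
      -- the set of good x
      set S : Set ℝ := {x | ∀ᵐ y : ℝ, F x y = F₁ x * F₂ y} with hS
      have hSc : volume Sᶜ = 0 := hae'
      have hpick : ∀ n : ℕ, ∃ x ∈ S, x ∈ Set.Ioo x₀ (x₀ + 1 / (n + 1)) := by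
        intro n
        by_contra hcon
        push_neg at hcon
        have hsub : Set.Ioo x₀ (x₀ + 1 / (n + 1)) ⊆ Sᶜ := by
          intro z hz
          intro hzS
          exact hcon z hzS hz
        have : volume (Set.Ioo x₀ (x₀ + 1 / (n + 1))) = 0 :=
          measure_mono_null hsub hSc
        rw [Real.volume_Ioo] at this
        have hpos : (0 : ℝ) < 1 / (n + 1) := by positivity
        simp only [ENNReal.ofReal_eq_zero] at this
        linarith
      choose X hXS hXmem using hpick
      have hpick2 : ∀ n : ℕ, ∃ y, F (X n) y = F₁ (X n) * F₂ y ∧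
          y ∈ Set.Ioo y₀ (y₀ + 1 / (n + 1)) := by
        intro n
        have hXn := hXS n
        simp only [hS, Set.mem_setOf_eq] at hXn
        set T : Set ℝ := {y | F (X n) y = F₁ (X n) * F₂ y} with hT
        have hTc : volume Tᶜ = 0 := hXn
        by_contra hcon
        push_neg at hcon
        have hsub : Set.Ioo y₀ (y₀ + 1 / (n + 1)) ⊆ Tᶜ := by
          intro z hz hzT
          exact hcon z hzT hz
        have : volume (Set.Ioo y₀ (y₀ + 1 / (n + 1))) = 0 :=
          measure_mono_null hsub hTc
        rw [Real.volume_Ioo] at this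
        have hpos : (0 : ℝ) < 1 / (n + 1) := by positivity
        simp only [ENNReal.ofReal_eq_zero] at this
        linarith
      choose Y hYeq hYmem using hpick2
      -- limits
      have hlimF : Tendsto (fun n => F (X n) (Y n)) atTop (𝓝 (F x₀ y₀)) := by
        apply tendsto_of_tendsto_of_tendsto_of_le_of_le
          (tendsto_const_nhds) (tendsto_cdf2 μ x₀ y₀)
        · intro n
          exact measure_mono (Set.prod_mono (Set.Iic_subset_Iic.2 (hXmem n).1.le)
            (Set.Iic_subset_Iic.2 (hYmem n).1.le))
        · intro n
          exact measure_mono (Set.prod_mono (Set.Iic_subset_Iic.2 (hXmem n).2.le)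
            (Set.Iic_subset_Iic.2 (hYmem n).2.le))
      have hlimF₁ : Tendsto (fun n => F₁ (X n)) atTop (𝓝 (F₁ x₀)) := by
        apply tendsto_of_tendsto_of_tendsto_of_le_of_le
          (tendsto_const_nhds) (tendsto_cdf1 (μ.map Prod.fst) x₀)
        · intro n; exact measure_mono (Set.Iic_subset_Iic.2 (hXmem n).1.le)
        · intro n; exact measure_mono (Set.Iic_subset_Iic.2 (hXmem n).2.le)
      have hlimF₂ : Tendsto (fun n => F₂ (Y n)) atTop (𝓝 (F₂ y₀)) := by
        apply tendsto_of_tendsto_of_tendsto_of_le_of_le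
          (tendsto_const_nhds) (tendsto_cdf1 (μ.map Prod.snd) y₀)
        · intro n; exact measure_mono (Set.Iic_subset_Iic.2 (hYmem n).1.le)
        · intro n; exact measure_mono (Set.Iic_subset_Iic.2 (hYmem n).2.le)
      have hlimprod : Tendsto (fun n => F₁ (X n) * F₂ (Y n)) atTop (𝓝 (F₁ x₀ * F₂ y₀)) :=
        ENNReal.Tendsto.mul hlimF₁ (Or.inr (measure_ne_top _ _)) hlimF₂
          (Or.inr (measure_ne_top _ _))
      have : Tendsto (fun n => F (X n) (Y n)) atTop (𝓝 (F₁ x₀ * F₂ y₀)) := by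
        apply hlimprod.congr
        intro n
        exact (hYeq n).symm
      exact tendsto_nhds_unique hlimF this
    -- conclude measure equality via π-system argument
    symm
    have hgen : MeasurableSpace.generateFrom (Set.range Set.Iic) =
        (inferInstance : MeasurableSpace ℝ) := by
      rw [← borel_eq_generateFrom_Iic ℝ]
      exact (BorelSpace.measurable_eq (α := ℝ)).symm
    refine Measure.prod_eq_generateFrom hgen hgen isPiSystem_Iic isPiSystem_Iic
      ?_ ?_ ?_
    · exact ⟨fun n => Set.Iic (n : ℝ), fun n => Set.mem_range_self _,
        fun n => measure_lt_top _ _, by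
          ext x; simp only [Set.mem_iUnion, Set.mem_Iic, Set.mem_univ, iff_true]
          obtain ⟨n, hn⟩ := exists_nat_ge x; exact ⟨n, hn⟩⟩
    · exact ⟨fun n => Set.Iic (n : ℝ), fun n => Set.mem_range_self _,
        fun n => measure_lt_top _ _, by
          ext x; simp only [Set.mem_iUnion, Set.mem_Iic, Set.mem_univ, iff_true]
          obtain ⟨n, hn⟩ := exists_nat_ge x; exact ⟨n, hn⟩⟩
    · rintro s ⟨x, rfl⟩ t ⟨y, rfl⟩
      exact hall x y
  · intro h
    have hzero : ∀ x y : ℝ, f x y = 0 := by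
      intro x y
      have hμ : μ {p : ℝ × ℝ | p.1 ≤ x ∧ p.2 ≤ y} = F₁ x * F₂ y := by
        rw [hset x y]
        conv_lhs => rw [h]
        exact Measure.prod_prod _ _
      simp only [hf, hF, ← hset x y, hμ, ENNReal.toReal_mul, sub_self, ne_eq,
        OfNat.ofNat_ne_zero, not_false_eq_true, zero_pow, ENNReal.ofReal_zero]
    have : ∀ x : ℝ, (∫⁻ y : ℝ,
        ENNReal.ofReal
          (((μ {p : ℝ × ℝ | p.1 ≤ x ∧ p.2 ≤ y}).toReal -
              ((μ.map Prod.fst) (Set.Iic x)).toReal *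
                ((μ.map Prod.snd) (Set.Iic y)).toReal) ^ 2)) = 0 := by
      intro x
      rw [← lintegral_zero]
      congr 1
      ext y
      exact hzero x y
    simp only [this, lintegral_zero]
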